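/- arXiv:1710.01604 — 2 statements merged into one kernel-verified Lean document; each statement's English description precedes it below -/
import Mathlib

section
/- Given constants D > 0 and κ_a > 0, define φ(τ) = κ_a/√(πDτ) − (κ_a²/D)·erfcx(κ_a·√(τ/D)) for τ > 0. Then φ is integrable on (0,∞) and ∫_0^∞ φ(τ) dτ = 1; i.e., φ is a probability density on (0,∞). -/
open Real MeasureTheory Set

/-- The complementary error function `erfc x = (2/√π) ∫_x^∞ e^{-t²} dt`. -/
noncomputable def erfc (x : ℝ) : ℝ := (2 / Real.sqrt π) * ∫ t in Set.Ioi x, Real.exp (-t ^ 2)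

/-- The scaled complementary error function `erfcx x = e^{x²} erfc x`. -/
noncomputable def erfcx (x : ℝ) : ℝ := Real.exp (x ^ 2) * erfc x

/-- The first-adsorption-time density
`φ(τ) = κ_a/√(πDτ) − (κ_a²/D) erfcx(κ_a √(τ/D))`. -/
noncomputable def phi (D κa τ : ℝ) : ℝ :=
  κa / Real.sqrt (π * D * τ) - (κa ^ 2 / D) * erfcx (κa * Real.sqrt (τ / D))

/-!
`φ` is the derivative of `F τ = 1 - erfcx (κa √(τ/D))`, by `erfcx' x = 2x erfcx x - 2/√π`.
The Mills-ratio bound `erfcx x ≤ 1 / (√π x)` makes `φ` nonnegative, so the fundamental theorem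
of calculus on `(0, ∞)` gives integrability and `∫ φ = lim F - F 0 = 1 - 0`, since
`erfcx 0 = 1` and `erfcx x → 0` as `x → ∞`.
-/

open Filter Topology

lemma integrable_exp_neg_sq : Integrable fun t : ℝ ↦ exp (-t ^ 2) := by
  simpa using integrable_exp_neg_mul_sq one_pos

lemma continuous_exp_neg_sq : Continuous fun t : ℝ ↦ exp (-t ^ 2) := by
  fun_prop

lemma setIntegral_Ioi_exp_neg_sq_eq_sub (x : ℝ) :
    ∫ t in Ioi x, exp (-t ^ 2) =
      (∫ t in Ioi 0, exp (-t ^ 2)) - ∫ t in (0)..x, exp (-t ^ 2) := by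
  have h_Ioi_eq (a : ℝ) :
      ∫ t in Ioi a, exp (-t ^ 2) = (∫ t, exp (-t ^ 2)) - ∫ t in Iic a, exp (-t ^ 2) := by
    rw [← integral_add_compl measurableSet_Iic integrable_exp_neg_sq, compl_Iic]
    ring
  rw [h_Ioi_eq x, h_Ioi_eq 0, ← intervalIntegral.integral_Iic_sub_Iic
    integrable_exp_neg_sq.integrableOn integrable_exp_neg_sq.integrableOn]
  ring

lemma hasDerivAt_erfc (x : ℝ) : HasDerivAt erfc (-(2 / √π * exp (-x ^ 2))) x := by
  have h_primitive : HasDerivAt (fun u ↦ ∫ t in (0)..u, exp (-t ^ 2)) (exp (-x ^ 2)) x :=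
    intervalIntegral.integral_hasDerivAt_right integrable_exp_neg_sq.intervalIntegrable
      (continuous_exp_neg_sq.stronglyMeasurableAtFilter _ _) continuous_exp_neg_sq.continuousAt
  have h_erfc :
      erfc = fun u ↦
        2 / √π * ((∫ t in Ioi 0, exp (-t ^ 2)) - ∫ t in (0)..u, exp (-t ^ 2)) :=
    funext fun u ↦ by rw [erfc, setIntegral_Ioi_exp_neg_sq_eq_sub]
  rw [h_erfc]
  exact (((hasDerivAt_const x _).fun_sub h_primitive).const_mul _).congr_deriv (by ring)

lemma continuous_erfc : Continuous erfc :=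
  continuous_iff_continuousAt.mpr fun x ↦ (hasDerivAt_erfc x).continuousAt

lemma erfc_zero : erfc 0 = 1 := by
  have h_half : ∫ t in Ioi (0 : ℝ), exp (-t ^ 2) = √π / 2 := by
    simpa using integral_gaussian_Ioi 1
  have : √π ≠ 0 := (sqrt_pos.mpr pi_pos).ne'
  rw [erfc, h_half]
  field_simp

lemma erfc_nonneg (x : ℝ) : 0 ≤ erfc x :=
  mul_nonneg (by positivity) (setIntegral_nonneg measurableSet_Ioi fun t _ ↦ (exp_pos _).le)

lemma integral_Ioi_mul_exp_neg_sq {x : ℝ} (hx : 0 ≤ x) :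
    ∫ t in Ioi x, t * exp (-t ^ 2) = exp (-x ^ 2) / 2 := by
  have h_deriv (y : ℝ) (_ : y ∈ Ici x) :
      HasDerivAt (fun t ↦ -exp (-t ^ 2) / 2) (y * exp (-y ^ 2)) y :=
    ((hasDerivAt_pow 2 y).fun_neg.exp.fun_neg.div_const 2).congr_deriv (by push_cast; ring)
  have h_nonneg : ∀ y ∈ Ioi x, 0 ≤ y * exp (-y ^ 2) := fun y hy ↦
    mul_nonneg (hx.trans hy.le) (exp_pos _).le
  have h_lim : Tendsto (fun t : ℝ ↦ -exp (-t ^ 2) / 2) atTop (𝓝 0) := by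
    simpa using ((tendsto_exp_atBot.comp
      (tendsto_neg_atTop_atBot.comp (tendsto_pow_atTop two_ne_zero))).neg.div_const 2)
  rw [integral_Ioi_of_hasDerivAt_of_nonneg' h_deriv h_nonneg h_lim]
  ring

-- Compare `e^{-t²}` with `(t / x) e^{-t²}` on `(x, ∞)`, which has an explicit primitive.
lemma erfc_le {x : ℝ} (hx : 0 < x) : erfc x ≤ exp (-x ^ 2) / (√π * x) := by
  have h_int : IntegrableOn (fun t ↦ t / x * exp (-t ^ 2)) (Ioi x) := by
    simpa [div_mul_eq_mul_div] using
      ((integrable_mul_exp_neg_mul_sq one_pos).div_const x).integrableOn (s := Ioi x)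
  have h_mono : ∫ t in Ioi x, exp (-t ^ 2) ≤ ∫ t in Ioi x, t / x * exp (-t ^ 2) := by
    refine setIntegral_mono_on integrable_exp_neg_sq.integrableOn h_int measurableSet_Ioi
      fun t ht ↦ le_mul_of_one_le_left (exp_pos _).le ((one_le_div hx).mpr ht.le)
  have h_eval : ∫ t in Ioi x, t / x * exp (-t ^ 2) = exp (-x ^ 2) / (2 * x) := by
    simp_rw [div_mul_eq_mul_div]
    rw [integral_div, integral_Ioi_mul_exp_neg_sq hx.le]
    ring
  have : 0 < √π := sqrt_pos.mpr pi_pos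
  calc erfc x ≤ 2 / √π * (exp (-x ^ 2) / (2 * x)) :=
        mul_le_mul_of_nonneg_left (h_mono.trans_eq h_eval) (by positivity)
    _ = exp (-x ^ 2) / (√π * x) := by field_simp

lemma erfcx_zero : erfcx 0 = 1 := by
  simp [erfcx, erfc_zero]

lemma continuous_erfcx : Continuous erfcx :=
  (continuous_exp.comp (continuous_pow 2)).mul continuous_erfc

lemma hasDerivAt_erfcx (x : ℝ) : HasDerivAt erfcx (2 * x * erfcx x - 2 / √π) x := by
  have h_exp_mul : exp (x ^ 2) * exp (-x ^ 2) = 1 := by rw [← exp_add]; simp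
  refine (((hasDerivAt_pow 2 x).exp).fun_mul (hasDerivAt_erfc x)).congr_deriv ?_
  rw [erfcx]
  push_cast
  linear_combination (-(2 / √π)) * h_exp_mul

lemma erfcx_nonneg (x : ℝ) : 0 ≤ erfcx x :=
  mul_nonneg (exp_pos _).le (erfc_nonneg x)

lemma erfcx_le {x : ℝ} (hx : 0 < x) : erfcx x ≤ (√π * x)⁻¹ := by
  calc erfcx x ≤ exp (x ^ 2) * (exp (-x ^ 2) / (√π * x)) :=
        mul_le_mul_of_nonneg_left (erfc_le hx) (exp_pos _).le
    _ = (√π * x)⁻¹ := by rw [← mul_div_assoc, ← exp_add]; simp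

lemma tendsto_erfcx_atTop : Tendsto erfcx atTop (𝓝 0) := by
  have h_inv : Tendsto (fun x : ℝ ↦ (√π * x)⁻¹) atTop (𝓝 0) :=
    tendsto_inv_atTop_zero.comp (tendsto_id.const_mul_atTop (sqrt_pos.mpr pi_pos))
  refine tendsto_of_tendsto_of_tendsto_of_le_of_le' tendsto_const_nhds h_inv
    (Eventually.of_forall erfcx_nonneg) ?_
  filter_upwards [eventually_gt_atTop 0] with x hx using erfcx_le hx

/-- The probability that the first adsorption has happened by time `τ`. -/
noncomputable def firstAdsorptionCDF (D κa τ : ℝ) : ℝ := 1 - erfcx (κa * √(τ / D))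

lemma phi_eq {D κa τ : ℝ} (hD : 0 < D) (hτ : 0 ≤ τ) :
    phi D κa τ = κa / (√π * √(τ / D) * D) - κa ^ 2 / D * erfcx (κa * √(τ / D)) := by
  have h_sqrt : √(π * D * τ) = √π * √(τ / D) * D := by
    have : √D ≠ 0 := (sqrt_pos.mpr hD).ne'
    rw [sqrt_mul (by positivity), sqrt_mul pi_pos.le, sqrt_div hτ]
    field_simp
    rw [sq_sqrt hD.le, mul_comm]
  rw [phi, h_sqrt]

lemma hasDerivAt_firstAdsorptionCDF {D κa τ : ℝ} (hD : 0 < D) (hτ : 0 < τ) :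
    HasDerivAt (firstAdsorptionCDF D κa) (phi D κa τ) τ := by
  have hs : 0 < √(τ / D) := sqrt_pos.mpr (div_pos hτ hD)
  have h_sqrt : HasDerivAt (fun t ↦ √(t / D)) (1 / (2 * √(τ / D)) * (1 / D)) τ :=
    (hasDerivAt_sqrt (div_pos hτ hD).ne').comp τ ((hasDerivAt_id τ).div_const D)
  have h := ((hasDerivAt_erfcx _).comp τ (h_sqrt.const_mul κa)).const_sub 1
  refine h.congr_deriv ?_
  have : √π ≠ 0 := (sqrt_pos.mpr pi_pos).ne'
  rw [phi_eq hD hτ.le]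
  field_simp
  ring

lemma phi_nonneg {D κa τ : ℝ} (hD : 0 < D) (hκa : 0 < κa) (hτ : 0 < τ) :
    0 ≤ phi D κa τ := by
  have hs : 0 < √(τ / D) := sqrt_pos.mpr (div_pos hτ hD)
  have : 0 < √π := sqrt_pos.mpr pi_pos
  rw [phi_eq hD hτ.le, sub_nonneg]
  calc κa ^ 2 / D * erfcx (κa * √(τ / D))
        ≤ κa ^ 2 / D * (√π * (κa * √(τ / D)))⁻¹ :=
        mul_le_mul_of_nonneg_left (erfcx_le (by positivity)) (by positivity)
    _ = κa / (√π * √(τ / D) * D) := by field_simp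

lemma continuous_firstAdsorptionCDF (D κa : ℝ) : Continuous (firstAdsorptionCDF D κa) :=
  continuous_const.sub (continuous_erfcx.comp (by fun_prop))

lemma firstAdsorptionCDF_zero (D κa : ℝ) : firstAdsorptionCDF D κa 0 = 0 := by
  simp [firstAdsorptionCDF, erfcx_zero]

lemma tendsto_firstAdsorptionCDF_atTop {D κa : ℝ} (hD : 0 < D) (hκa : 0 < κa) :
    Tendsto (firstAdsorptionCDF D κa) atTop (𝓝 1) := by
  have h_arg : Tendsto (fun τ ↦ κa * √(τ / D)) atTop atTop :=
    (tendsto_sqrt_atTop.comp (tendsto_id.atTop_div_const hD)).const_mul_atTop hκa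
  have h := (tendsto_erfcx_atTop.comp h_arg).const_sub 1
  rwa [sub_zero] at h

/-- `φ` is integrable on `(0,∞)` with total integral `1`,
i.e., `φ` is a probability density on `(0,∞)`. -/
theorem phi_integral_Ioi (D κa : ℝ) (hD : 0 < D) (hκa : 0 < κa) :
    IntegrableOn (phi D κa) (Set.Ioi 0) ∧
      ∫ τ in Set.Ioi (0 : ℝ), phi D κa τ = 1 := by
  have h_cont := (continuous_firstAdsorptionCDF D κa).continuousWithinAt (s := Ici 0) (x := 0)
  have h_deriv (τ : ℝ) (hτ : τ ∈ Ioi 0) := hasDerivAt_firstAdsorptionCDF (κa := κa) hD hτ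
  have h_nonneg (τ : ℝ) (hτ : τ ∈ Ioi 0) := phi_nonneg hD hκa hτ
  have h_lim := tendsto_firstAdsorptionCDF_atTop hD hκa
  refine ⟨integrableOn_Ioi_deriv_of_nonneg h_cont h_deriv h_nonneg h_lim, ?_⟩
  rw [integral_Ioi_of_hasDerivAt_of_nonneg h_cont h_deriv h_nonneg h_lim,
    firstAdsorptionCDF_zero, sub_zero]
end

section
/- Let f : ℝ → [0,∞) be measurable, vanishing on (−∞,0), with f(τ) < ∞ for all τ, ∫_ℝ f ≤ 1 and ‖f‖_{L²(ℝ)} < ∞, and let κ_d ≥ 0. Then for all τ, t with 0 ≤ τ ≤ t, the series Σ_{j=1}^∞ f^{j*}(τ)·p[j−1; κ_d·(t−τ)] converges (the family of nonnegative terms is summable with finite sum). -/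
/-!
For `n ≥ 2` the convolution power `f^{n*}` is bounded by `‖f‖₂²`: for `n = 2` this is the pointwise
AM–GM inequality `f(x) f(τ - x) ≤ (f(x)² + f(τ - x)²) / 2`, and convolving a function bounded by `C`
with `f` keeps it bounded by `C`, because `∫ f ≤ 1`. So the coefficients `f^{j*}(τ)` are bounded
in `j`, and the series is dominated by a multiple of the Poisson weights, which are summable.
-/

open Real MeasureTheory Set

/-- Convolution powers of a function `f : ℝ → ℝ`: `f^{1*} = f` and
`f^{(j+1)*}(τ) = ∫ f^{j*}(x) f(τ−x) dx`.  `convPow f 0` is a junk value. -/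
noncomputable def convPow (f : ℝ → ℝ) : ℕ → ℝ → ℝ
  | 0 => fun _ => 0
  | 1 => f
  | (n + 2) => fun τ => ∫ x, convPow f (n + 1) x * f (τ - x)

/-- `poissonPMFReal'`: the pmf of a Poisson random variable with mean `λ`,
`p[j;λ] = λ^j e^{−λ}/j!`. -/
noncomputable def pois (j : ℕ) (l : ℝ) : ℝ := l ^ j * Real.exp (-l) / j.factorial

theorem convPow_nonneg {f : ℝ → ℝ} (hf : ∀ x, 0 ≤ f x) (n : ℕ) (τ : ℝ) : 0 ≤ convPow f n τ :=
  match n with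
  | 0 => le_rfl
  | 1 => hf τ
  | n + 2 => integral_nonneg fun x => mul_nonneg (convPow_nonneg hf (n + 1) x) (hf _)

theorem integral_mul_comp_sub_le_integral_sq {f : ℝ → ℝ} (hf : ∀ x, 0 ≤ f x)
    (hf_sq : Integrable (fun x => f x ^ 2)) (τ : ℝ) :
    ∫ x, f x * f (τ - x) ≤ ∫ x, f x ^ 2 := by
  have h_shift : Integrable (fun x => f (τ - x) ^ 2) := hf_sq.comp_sub_left τ
  calc ∫ x, f x * f (τ - x)
      ≤ ∫ x, (f x ^ 2 + f (τ - x) ^ 2) / 2 := by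
        refine integral_mono_of_nonneg (.of_forall fun x => mul_nonneg (hf x) (hf _))
          ((hf_sq.add h_shift).div_const 2) (.of_forall fun x => ?_)
        nlinarith [sq_nonneg (f x - f (τ - x))]
    _ = ∫ x, f x ^ 2 := by
        rw [integral_div, integral_add hf_sq h_shift,
          integral_sub_left_eq_self (fun x => f x ^ 2) volume τ]
        ring

theorem integral_mul_comp_sub_le_mul_integral {f g : ℝ → ℝ} {C : ℝ} (hf : ∀ x, 0 ≤ f x)
    (hf_int : Integrable f) (hg : ∀ x, 0 ≤ g x) (hgC : ∀ x, g x ≤ C) (τ : ℝ) :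
    ∫ x, g x * f (τ - x) ≤ C * ∫ x, f x := by
  calc ∫ x, g x * f (τ - x)
      ≤ ∫ x, C * f (τ - x) :=
        integral_mono_of_nonneg (.of_forall fun x => mul_nonneg (hg x) (hf _))
          ((hf_int.comp_sub_left τ).const_mul C)
          (.of_forall fun x => mul_le_mul_of_nonneg_right (hgC x) (hf _))
    _ = C * ∫ x, f x := by rw [integral_const_mul, integral_sub_left_eq_self f volume τ]

theorem convPow_add_two_le_integral_sq {f : ℝ → ℝ} (hf : ∀ x, 0 ≤ f x)
    (hf_int : Integrable f) (hf_mass : ∫ x, f x ≤ 1) (hf_sq : Integrable (fun x => f x ^ 2))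
    (n : ℕ) (τ : ℝ) : convPow f (n + 2) τ ≤ ∫ x, f x ^ 2 := by
  induction n generalizing τ with
  | zero => exact integral_mul_comp_sub_le_integral_sq hf hf_sq τ
  | succ n ih =>
    have hC : 0 ≤ ∫ x, f x ^ 2 := integral_nonneg fun x => sq_nonneg _
    calc convPow f (n + 3) τ
        ≤ (∫ x, f x ^ 2) * ∫ x, f x :=
          integral_mul_comp_sub_le_mul_integral hf hf_int (convPow_nonneg hf (n + 2)) ih τ
      _ ≤ ∫ x, f x ^ 2 := mul_le_of_le_one_right hC hf_mass

theorem convPow_succ_le_max {f : ℝ → ℝ} (hf : ∀ x, 0 ≤ f x)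
    (hf_int : Integrable f) (hf_mass : ∫ x, f x ≤ 1) (hf_sq : Integrable (fun x => f x ^ 2))
    (n : ℕ) (τ : ℝ) : convPow f (n + 1) τ ≤ max (f τ) (∫ x, f x ^ 2) := by
  cases n with
  | zero => exact le_max_left _ _
  | succ n =>
    exact (convPow_add_two_le_integral_sq hf hf_int hf_mass hf_sq n τ).trans (le_max_right _ _)

theorem summable_pois (l : ℝ) : Summable (fun j => pois j l) := by
  refine ((Real.summable_pow_div_factorial l).mul_right (exp (-l))).congr fun j => ?_
  rw [pois, mul_div_right_comm]

theorem series_summable_general (f : ℝ → ℝ)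
    (hf_nonneg : ∀ x, 0 ≤ f x)
    (hf_int : Integrable f) (hf_mass : ∫ x, f x ≤ 1)
    (hf_sq : Integrable (fun x => f x ^ 2))
    (κd : ℝ)
    (τ t : ℝ) :
    Summable (fun j : ℕ => convPow f (j + 1) τ * pois j (κd * (t - τ))) := by
  refine .of_norm_bounded ((summable_pois (κd * (t - τ))).norm.mul_left
    (max (f τ) (∫ x, f x ^ 2))) fun j => ?_
  rw [norm_mul, Real.norm_of_nonneg (convPow_nonneg hf_nonneg _ τ)]
  exact mul_le_mul_of_nonneg_right
    (convPow_succ_le_max hf_nonneg hf_int hf_mass hf_sq j τ) (norm_nonneg _)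

/-- the series `Σ_{j=1}^∞ f^{j*}(τ) p[j−1; κ_d(t−τ)]` defining the density
`φ(τ,t)` of the total free-motion time converges for all `0 ≤ τ ≤ t`. -/
theorem series_summable (f : ℝ → ℝ) (hf_meas : Measurable f)
    (hf_nonneg : ∀ x, 0 ≤ f x) (hf_zero : ∀ x < (0 : ℝ), f x = 0)
    (hf_int : Integrable f) (hf_mass : ∫ x, f x ≤ 1)
    (hf_sq : Integrable (fun x => f x ^ 2))
    (κd : ℝ) (hκd : 0 ≤ κd)
    (τ t : ℝ) (hτ : 0 ≤ τ) (hτt : τ ≤ t) :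
    Summable (fun j : ℕ => convPow f (j + 1) τ * pois j (κd * (t - τ))) :=
  series_summable_general f hf_nonneg hf_int hf_mass hf_sq κd τ t
end
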